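/- Let p : ℝ³ → ℂ be a smooth function with Δp = 0 and κ(p,p) = 0 (Euclidean, in the three variables x₁,x₂,x₃). Define Φ* on the open set Ω = {x ∈ ℝ⁵ : x₄ ≠ x₅} by Φ*(x) = p(x₁,x₂,x₃)/(x₄ − x₅)². Then on Ω the Lorentzian Laplacian vanishes, τ_L(Φ*) = −∂²Φ*/∂x₅² + Σ_{k=1}^{4} ∂²Φ*/∂xₖ² = 0, and the Lorentzian conformality operator vanishes, κ_L(Φ*,Φ*) = −(∂Φ*/∂x₅)² + Σ_{k=1}^{4} (∂Φ*/∂xₖ)² = 0. Moreover Ω contains the region U⁵ = {x ∈ ℝ⁵ : −x₅² + x₁²+x₂²+x₃²+x₄² < 0}, so Φ* is defined on all of U⁵ and in particular on the hyperboloid model of H⁴. -/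

import Mathlib

/-- The partial derivative in direction `k` of a complex-valued function on `ℝᵐ`. -/
noncomputable def pd {m : ℕ} (k : Fin m) (f : (Fin m → ℝ) → ℂ) : (Fin m → ℝ) → ℂ :=
  fun x => fderiv ℝ f x (Pi.single k 1)

/-- The Euclidean Laplacian `Δf = ∑ₖ ∂²f/∂xₖ²`. -/
noncomputable def lap {m : ℕ} (f : (Fin m → ℝ) → ℂ) : (Fin m → ℝ) → ℂ :=
  fun x => ∑ k : Fin m, pd k (pd k f) x

/-- The conformality operator `κ(f,g) = ∑ₖ (∂f/∂xₖ)(∂g/∂xₖ)`. -/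
noncomputable def conf {m : ℕ} (f g : (Fin m → ℝ) → ℂ) : (Fin m → ℝ) → ℂ :=
  fun x => ∑ k : Fin m, pd k f x * pd k g x

/-- The Lorentzian Laplacian on `ℝ⁵₁`, where the coordinate `x₅` (index `4`)
carries the sign `-1`. -/
noncomputable def lapL (f : (Fin 5 → ℝ) → ℂ) : (Fin 5 → ℝ) → ℂ :=
  fun x => ∑ k : Fin 5, (if k = 4 then (-1 : ℂ) else 1) * pd k (pd k f) x

/-- The Lorentzian conformality operator on `ℝ⁵₁`. -/
noncomputable def confL (f g : (Fin 5 → ℝ) → ℂ) : (Fin 5 → ℝ) → ℂ :=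
  fun x => ∑ k : Fin 5, (if k = 4 then (-1 : ℂ) else 1) * (pd k f x * pd k g x)

noncomputable def Pr : (Fin 5 → ℝ) →L[ℝ] (Fin 3 → ℝ) :=
  ContinuousLinearMap.pi fun i => ContinuousLinearMap.proj ⟨(i:ℕ), by omega⟩

noncomputable def L34 : (Fin 5 → ℝ) →L[ℝ] ℝ :=
  (ContinuousLinearMap.proj (R := ℝ) (φ := fun _ : Fin 5 => ℝ) 3) -
  (ContinuousLinearMap.proj (R := ℝ) (φ := fun _ : Fin 5 => ℝ) 4)

noncomputable def Sc : (Fin 5 → ℝ) →L[ℝ] ℂ := Complex.ofRealCLM.comp L34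

lemma Sc_apply (x : Fin 5 → ℝ) : Sc x = (x 3 : ℂ) - x 4 := by
  simp [Sc, L34]

lemma Pr_apply (x : Fin 5 → ℝ) (i : Fin 3) : Pr x i = x ⟨(i:ℕ), by omega⟩ := rfl

lemma Sc_ne (x : Fin 5 → ℝ) (hx : x 3 ≠ x 4) : Sc x ≠ 0 := by
  rw [Sc_apply]
  exact sub_ne_zero.mpr (by exact_mod_cast hx)

lemma Pr_single (j : Fin 3) :
    Pr (Pi.single (⟨(j:ℕ), by omega⟩ : Fin 5) 1) = Pi.single j 1 := by
  funext i
  simp [Pr_apply, Pi.single_apply, Fin.ext_iff]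

lemma Pr_single3 : Pr (Pi.single (3:Fin 5) 1) = 0 := by
  funext i
  simp [Pr_apply, Pi.single_apply, Fin.ext_iff]
  omega

lemma Pr_single4 : Pr (Pi.single (4:Fin 5) 1) = 0 := by
  funext i
  simp [Pr_apply, Pi.single_apply, Fin.ext_iff]
  omega

lemma Sc_single (j : Fin 3) : Sc (Pi.single (⟨(j:ℕ), by omega⟩ : Fin 5) 1) = 0 := by
  rw [Sc_apply]
  have h3 : (Pi.single (⟨(j:ℕ), by omega⟩ : Fin 5) 1 : Fin 5 → ℝ) 3 = 0 := by
    simp [Pi.single_apply, Fin.ext_iff]; omega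
  have h4 : (Pi.single (⟨(j:ℕ), by omega⟩ : Fin 5) 1 : Fin 5 → ℝ) 4 = 0 := by
    simp [Pi.single_apply, Fin.ext_iff]; omega
  rw [h3, h4]; simp

lemma Sc_single3 : Sc (Pi.single (3:Fin 5) 1) = 1 := by
  rw [Sc_apply]; simp [Pi.single_apply]

lemma Sc_single4 : Sc (Pi.single (4:Fin 5) 1) = -1 := by
  rw [Sc_apply]; simp [Pi.single_apply]

lemma pdG (h : (Fin 3 → ℝ) → ℂ) (hh : Differentiable ℝ h) (n : ℤ)
    (k : Fin 5) (y : Fin 5 → ℝ) (hy : y 3 ≠ y 4) :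
    pd k (fun z => h (Pr z) * (Sc z) ^ n) y
      = Sc y ^ n * fderiv ℝ h (Pr y) (Pr (Pi.single k 1))
        + h (Pr y) * ((n : ℂ) * Sc y ^ (n - 1)) * Sc (Pi.single k 1) := by
  have h1 : HasFDerivAt (fun z => h (Pr z)) ((fderiv ℝ h (Pr y)).comp Pr) y :=
    ((hh (Pr y)).hasFDerivAt).comp y Pr.hasFDerivAt
  have h2 : HasFDerivAt (fun z => (Sc z) ^ n)
      (((n : ℂ) * Sc y ^ (n - 1)) • (Sc : (Fin 5 → ℝ) →L[ℝ] ℂ)) y :=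
    (hasDerivAt_zpow n (Sc y) (Or.inl (Sc_ne y hy))).comp_hasFDerivAt y Sc.hasFDerivAt
  have := (h1.mul h2).fderiv
  rw [pd, show (fun z => h (Pr z) * Sc z ^ n) = ((fun z => h (Pr z)) * fun z => Sc z ^ n) from rfl, this]
  simp
  ring

lemma evGen {x : Fin 5 → ℝ} (hx : x 3 ≠ x 4) {f g : (Fin 5 → ℝ) → ℂ}
    (hfg : ∀ z : Fin 5 → ℝ, z 3 ≠ z 4 → f z = g z) : f =ᶠ[nhds x] g := by
  have hopen : IsOpen {z : Fin 5 → ℝ | z 3 ≠ z 4} :=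
    isOpen_ne_fun (continuous_apply 3) (continuous_apply 4)
  exact Filter.eventuallyEq_of_mem (hopen.mem_nhds hx) hfg

lemma pd_congr {x : Fin 5 → ℝ} (hx : x 3 ≠ x 4) {f g : (Fin 5 → ℝ) → ℂ}
    (hfg : ∀ z : Fin 5 → ℝ, z 3 ≠ z 4 → f z = g z) (k : Fin 5) :
    pd k f x = pd k g x := by
  rw [pd, pd, (evGen hx hfg).fderiv_eq]

lemma pd_contDiff (j : Fin 3) (p : (Fin 3 → ℝ) → ℂ) (hp : ContDiff ℝ (⊤ : ℕ∞) p) :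
    ContDiff ℝ (⊤ : ℕ∞) (pd j p) :=
  (hp.fderiv_right (by simp)).clm_apply contDiff_const

theorem stmt15 (p : (Fin 3 → ℝ) → ℂ) (hp : ContDiff ℝ (⊤ : ℕ∞) p)
    (hpl : ∀ x, lap p x = 0) (hpc : ∀ x, conf p p x = 0)
    (Φ : (Fin 5 → ℝ) → ℂ)
    (hΦ : ∀ x, Φ x = p (fun i => x ⟨(i : ℕ), by have := i.isLt; omega⟩) /
        ((x 3 : ℂ) - (x 4 : ℂ)) ^ 2) :
    (∀ x : Fin 5 → ℝ, x 3 ≠ x 4 → lapL Φ x = 0 ∧ confL Φ Φ x = 0) ∧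
    (∀ x : Fin 5 → ℝ,
      -(x 4) ^ 2 + (x 0) ^ 2 + (x 1) ^ 2 + (x 2) ^ 2 + (x 3) ^ 2 < 0 → x 3 ≠ x 4) := by
  have hdp : Differentiable ℝ p := hp.differentiable (by simp)
  -- Φ agrees with the nice form on Ω
  have hPhiG : ∀ z : Fin 5 → ℝ, z 3 ≠ z 4 → Φ z = p (Pr z) * Sc z ^ (-2:ℤ) := by
    intro z hz
    have hpr : p (fun i => z ⟨(i : ℕ), by have := i.isLt; omega⟩) = p (Pr z) := rfl
    rw [hΦ z, hpr, Sc_apply, div_eq_mul_inv, zpow_neg]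
    norm_num
  -- first derivatives on Ω
  have hA : ∀ (j : Fin 3) (z : Fin 5 → ℝ), z 3 ≠ z 4 →
      pd (⟨(j:ℕ), by omega⟩ : Fin 5) Φ z = pd j p (Pr z) * Sc z ^ (-2:ℤ) := by
    intro j z hz
    rw [pd_congr hz hPhiG, pdG p hdp (-2) _ z hz, Pr_single, Sc_single]
    show Sc z ^ (-2:ℤ) * fderiv ℝ p (Pr z) (Pi.single j 1) + _ = _
    rw [show fderiv ℝ p (Pr z) (Pi.single j 1) = pd j p (Pr z) from rfl]
    ring
  have h3 : ∀ z : Fin 5 → ℝ, z 3 ≠ z 4 →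
      pd 3 Φ z = (-2) * p (Pr z) * Sc z ^ (-3:ℤ) := by
    intro z hz
    rw [pd_congr hz hPhiG, pdG p hdp (-2) 3 z hz, Pr_single3, Sc_single3]
    norm_num
    ring
  have h4 : ∀ z : Fin 5 → ℝ, z 3 ≠ z 4 →
      pd 4 Φ z = 2 * p (Pr z) * Sc z ^ (-3:ℤ) := by
    intro z hz
    rw [pd_congr hz hPhiG, pdG p hdp (-2) 4 z hz, Pr_single4, Sc_single4]
    norm_num
    ring
  constructor
  · intro x hx
    -- second derivatives at x
    have hAA : ∀ j : Fin 3,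
        pd (⟨(j:ℕ), by omega⟩ : Fin 5) (pd (⟨(j:ℕ), by omega⟩ : Fin 5) Φ) x
          = Sc x ^ (-2:ℤ) * pd j (pd j p) (Pr x) := by
      intro j
      have hdj : Differentiable ℝ (pd j p) :=
        (pd_contDiff j p hp).differentiable (by simp)
      rw [pd_congr hx (hA j), pdG (pd j p) hdj (-2) _ x hx, Pr_single, Sc_single]
      show Sc x ^ (-2:ℤ) * fderiv ℝ (pd j p) (Pr x) (Pi.single j 1) + _ = _
      rw [show fderiv ℝ (pd j p) (Pr x) (Pi.single j 1) = pd j (pd j p) (Pr x) from rfl]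
      ring
    have h33 : pd 3 (pd 3 Φ) x = 6 * p (Pr x) * Sc x ^ (-4:ℤ) := by
      have hd2 : Differentiable ℝ (fun w => (-2:ℂ) * p w) := hdp.const_mul _
      have e := pdG (fun w => (-2:ℂ) * p w) hd2 (-3) 3 x hx
      rw [Pr_single3, Sc_single3] at e
      simp only [map_zero, mul_zero, mul_one, zero_add] at e
      rw [pd_congr hx h3, e]
      push_cast
      norm_num
      ring
    have h44 : pd 4 (pd 4 Φ) x = 6 * p (Pr x) * Sc x ^ (-4:ℤ) := by
      have hd2 : Differentiable ℝ (fun w => (2:ℂ) * p w) := hdp.const_mul _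
      have e := pdG (fun w => (2:ℂ) * p w) hd2 (-3) 4 x hx
      rw [Pr_single4, Sc_single4] at e
      simp only [map_zero, mul_zero, mul_one, zero_add] at e
      rw [pd_congr hx h4, e]
      push_cast
      norm_num
      ring
    have e0 : pd 0 (pd 0 Φ) x = Sc x ^ (-2:ℤ) * pd 0 (pd 0 p) (Pr x) := hAA 0
    have e1 : pd 1 (pd 1 Φ) x = Sc x ^ (-2:ℤ) * pd 1 (pd 1 p) (Pr x) := hAA 1
    have e2 : pd 2 (pd 2 Φ) x = Sc x ^ (-2:ℤ) * pd 2 (pd 2 p) (Pr x) := hAA 2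
    have hl := hpl (Pr x)
    simp only [lap, Fin.sum_univ_three] at hl
    have a0 : pd 0 Φ x = pd 0 p (Pr x) * Sc x ^ (-2:ℤ) := hA 0 x hx
    have a1 : pd 1 Φ x = pd 1 p (Pr x) * Sc x ^ (-2:ℤ) := hA 1 x hx
    have a2 : pd 2 Φ x = pd 2 p (Pr x) * Sc x ^ (-2:ℤ) := hA 2 x hx
    have a3 := h3 x hx
    have a4 := h4 x hx
    have hc := hpc (Pr x)
    simp only [conf, Fin.sum_univ_three] at hc
    constructor
    · simp only [lapL, Fin.sum_univ_five]
      rw [e0, e1, e2, h33, h44]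
      simp only [if_neg (show (0:Fin 5) ≠ 4 by decide), if_neg (show (1:Fin 5) ≠ 4 by decide),
        if_neg (show (2:Fin 5) ≠ 4 by decide), if_neg (show (3:Fin 5) ≠ 4 by decide),
        if_pos (rfl : (4:Fin 5) = 4), eq_self_iff_true, if_true, one_mul, neg_mul]
      linear_combination Sc x ^ (-2:ℤ) * hl
    · simp only [confL, Fin.sum_univ_five]
      rw [a0, a1, a2, a3, a4]
      simp only [if_neg (show (0:Fin 5) ≠ 4 by decide), if_neg (show (1:Fin 5) ≠ 4 by decide),
        if_neg (show (2:Fin 5) ≠ 4 by decide), if_neg (show (3:Fin 5) ≠ 4 by decide),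
        if_pos (rfl : (4:Fin 5) = 4), eq_self_iff_true, if_true, one_mul, neg_mul]
      linear_combination (Sc x ^ (-2:ℤ) * Sc x ^ (-2:ℤ)) * hc
  · intro x hlt h34
    rw [h34] at hlt
    linarith [sq_nonneg (x 0), sq_nonneg (x 1), sq_nonneg (x 2)]
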